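/- Suppose Q > 0. Then the explicit tuple given by G_b* = 0, R_b* = 0, B_e* = min{C_dis, E}, R_e* = min{R, E − B_e*}, G_e* = E − B_e* − R_e* is feasible for P3 and attains the minimum: f at this tuple is ≤ f(x) for every x ∈ F. -/

import Mathlib

/-!
With `Q ≥ 0` and `V P ≥ 0`, charging the battery (`G_b`, `R_b`) only adds cost, and the rest of the
objective is `-(Q B_e + V P (B_e + R_e))`, decreasing in the discharge `B_e` and in the non-grid
supply `B_e + R_e`. Every feasible point has `B_e ≤ min C_dis E` and `B_e + R_e ≤ min (B_e* + R) E`,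
and the greedy point attains both bounds, since `B_e* + min R (E - B_e*) = min (B_e* + R) E`.
-/

/-- The feasible set of problem P3. -/
def P3Feasible (R E Cchar Cdis : ℝ) (Re Rb Ge Gb Be : ℝ) : Prop :=
  0 ≤ Gb + Rb ∧ Gb + Rb ≤ Cchar ∧ 0 ≤ Gb ∧ 0 ≤ Rb ∧
  0 ≤ Be ∧ Be ≤ Cdis ∧ 0 ≤ Re + Rb ∧ Re + Rb ≤ R ∧ 0 ≤ Re ∧
  E = Re + Be + Ge ∧ 0 ≤ Ge ∧ (Gb + Rb) * Be = 0

/-- The objective function of problem P3. -/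
noncomputable def P3Obj (P V Q : ℝ) (Re Rb Ge Gb Be : ℝ) : ℝ :=
  (Q + V * P) * Gb + Q * Rb - (Q + V * P) * Be - V * P * Re

section Greedy

variable {α : Type*} [AddCommGroup α] [LinearOrder α] [IsOrderedAddMonoid α]

theorem add_min_sub_min_eq (c e r : α) :
    min c e + min r (e - min c e) = min (min c e + r) e := by
  rw [← min_add_add_left, add_sub_cancel]

theorem add_le_min_add_min_sub {b r' c e r : α} (hbc : b ≤ c) (hbe : b ≤ e) (hr : r' ≤ r)
    (hsum : b + r' ≤ e) : b + r' ≤ min c e + min r (e - min c e) := by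
  rw [add_min_sub_min_eq]
  exact le_min (add_le_add (le_min hbc hbe) hr) hsum

end Greedy

theorem P3Feasible.discharge_le {R E Cchar Cdis Re Rb Ge Gb Be : ℝ}
    (h : P3Feasible R E Cchar Cdis Re Rb Ge Gb Be) : Be ≤ E := by
  obtain ⟨-, -, -, -, -, -, -, -, hRe, hE, hGe, -⟩ := h
  linarith

theorem P3Feasible.discharge_add_renewable_le {R E Cchar Cdis Re Rb Ge Gb Be : ℝ}
    (h : P3Feasible R E Cchar Cdis Re Rb Ge Gb Be) :
    Be + Re ≤ min Cdis E + min R (E - min Cdis E) := by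
  have hBeE := h.discharge_le
  obtain ⟨-, -, -, hRb, -, hBe, -, hReRb, -, hE, hGe, -⟩ := h
  exact add_le_min_add_min_sub hBe hBeE (by linarith) (by linarith)

theorem p3Feasible_greedy {R E Cchar Cdis : ℝ} (hR : 0 ≤ R) (hE : 0 ≤ E) (hCchar : 0 ≤ Cchar)
    (hCdis : 0 ≤ Cdis) :
    P3Feasible R E Cchar Cdis (min R (E - min Cdis E)) 0
      (E - min Cdis E - min R (E - min Cdis E)) 0 (min Cdis E) := by
  have hRemaining : 0 ≤ E - min Cdis E := sub_nonneg.mpr (min_le_right _ _)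
  have hRe : 0 ≤ min R (E - min Cdis E) := le_min hR hRemaining
  refine ⟨by simp, by simpa using hCchar, le_rfl, le_rfl, le_min hCdis hE, min_le_left _ _,
    by simpa using hRe, by simp, hRe, by ring,
    sub_nonneg.mpr (min_le_right _ _), by simp⟩

theorem P3Obj_eq (P V Q Re Rb Ge Gb Be : ℝ) :
    P3Obj P V Q Re Rb Ge Gb Be = (Q + V * P) * Gb + Q * Rb - (Q * Be + V * P * (Be + Re)) := by
  unfold P3Obj
  ring

theorem P3Obj_le_of_discharge_le {P V Q Re Rb Ge Gb Be Re₀ Ge₀ Be₀ : ℝ} (hQ : 0 ≤ Q)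
    (hVP : 0 ≤ V * P) (hGb : 0 ≤ Gb) (hRb : 0 ≤ Rb) (hBe : Be ≤ Be₀)
    (hsum : Be + Re ≤ Be₀ + Re₀) :
    P3Obj P V Q Re₀ 0 Ge₀ 0 Be₀ ≤ P3Obj P V Q Re Rb Ge Gb Be := by
  rw [P3Obj_eq, P3Obj_eq]
  have hcharge : 0 ≤ (Q + V * P) * Gb + Q * Rb := by positivity
  have hsupply : Q * Be + V * P * (Be + Re) ≤ Q * Be₀ + V * P * (Be₀ + Re₀) :=
    add_le_add (mul_le_mul_of_nonneg_left hBe hQ) (mul_le_mul_of_nonneg_left hsum hVP)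
  linarith

/-- Explicit optimal solution of P3 when `Q > 0`. -/
theorem p3_explicit_solution_case3
    (R E P V Q Cchar Cdis : ℝ)
    (hR : 0 ≤ R) (hE : 0 ≤ E) (hP : 0 ≤ P) (hV : 0 < V)
    (hCchar : 0 ≤ Cchar) (hCdis : 0 ≤ Cdis)
    (hQ : 0 < Q) :
    P3Feasible R E Cchar Cdis
      (min R (E - min Cdis E))
      0
      (E - min Cdis E - min R (E - min Cdis E))
      0
      (min Cdis E) ∧
    ∀ Re' Rb' Ge' Gb' Be' : ℝ,
      P3Feasible R E Cchar Cdis Re' Rb' Ge' Gb' Be' →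
      P3Obj P V Q (min R (E - min Cdis E)) 0
        (E - min Cdis E - min R (E - min Cdis E)) 0 (min Cdis E) ≤
      P3Obj P V Q Re' Rb' Ge' Gb' Be' := by
  refine ⟨p3Feasible_greedy hR hE hCchar hCdis, fun Re' Rb' Ge' Gb' Be' h => ?_⟩
  have hBeE := h.discharge_le
  have hsum := h.discharge_add_renewable_le
  obtain ⟨-, -, hGb, hRb, -, hBe, -⟩ := h
  exact P3Obj_le_of_discharge_le hQ.le (mul_nonneg hV.le hP) hGb hRb (le_min hBe hBeE) hsum
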